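/- For the rotation number function ρ(t) = 2t^(3/4)·I(t) with I(t) = ∫_{−π/2}^{π/2} [cos s (1+t cos s)³]^{−1/4} ds, one has lim_{t→0+} ρ(t) = 0 and ρ(t) > 0 for all t ∈ (0,1); consequently, by continuity and the intermediate value theorem, ρ attains both rational and irrational values on (0,1). -/

import Mathlib

/-- The rotation number function for geometric mean curvature lines on the
torus of revolution. -/
noncomputable def ρfun (t : ℝ) : ℝ :=
  2 * t ^ ((3 : ℝ) / 4) * ∫ s in (-(Real.pi / 2))..(Real.pi / 2),
    (Real.cos s * (1 + t * Real.cos s) ^ 3) ^ (-(1 : ℝ) / 4)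

open Real Set MeasureTheory intervalIntegral Filter

lemma aux_bound_int :
    IntervalIntegrable (fun s => Real.cos s ^ (-(1:ℝ)/4)) volume (-(π/2)) (π/2) := by
  have h1 : IntervalIntegrable (fun s => Real.cos s ^ (-(1:ℝ)/4)) volume 0 (π/2) := by
    have hr : (-1 : ℝ) < -(1:ℝ)/4 := by norm_num
    have hbase : IntervalIntegrable (fun x : ℝ => x ^ (-(1:ℝ)/4)) volume 0 (π/2) :=
      intervalIntegral.intervalIntegrable_rpow' hr
    have hcomp := hbase.comp_sub_left (π/2)
    simp only [sub_zero, sub_self] at hcomp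
    have hcomp' := hcomp.symm
    have hconst : IntervalIntegrable
        (fun x : ℝ => (2/π) ^ (-(1:ℝ)/4) * ((π/2 - x) ^ (-(1:ℝ)/4))) volume 0 (π/2) :=
      hcomp'.const_mul _
    refine IntervalIntegrable.mono_fun' hconst ?_ ?_
    · refine (Measurable.aestronglyMeasurable ?_)
      exact (Real.measurable_cos.pow_const _)
    · rw [Filter.EventuallyLE, ae_restrict_iff' measurableSet_uIoc]
      filter_upwards with s hs
      rw [uIoc_of_le (by positivity)] at hs
      obtain ⟨hs0, hs2⟩ := hs
      have hcosnn : 0 ≤ Real.cos s := Real.cos_nonneg_of_mem_Icc ⟨by linarith [Real.pi_pos], hs2⟩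
      rcases eq_or_lt_of_le hs2 with rfl | hlt
      · simp [Real.cos_pi_div_two, Real.zero_rpow (by norm_num : (-(1:ℝ)/4) ≠ 0)]
      · have hcospos : 0 < Real.cos s := Real.cos_pos_of_mem_Ioo ⟨by linarith [Real.pi_pos], hlt⟩
        have hjord : 2/π * (π/2 - s) ≤ Real.cos s := by
          have := Real.one_sub_mul_le_cos hs0.le hs2
          have hπ : (π:ℝ) ≠ 0 := Real.pi_ne_zero
          calc 2/π * (π/2 - s) = 1 - 2/π * s := by field_simp
          _ ≤ Real.cos s := this
        have h2s : (0:ℝ) < π/2 - s := by linarith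
        have hpos2 : 0 < 2/π * (π/2 - s) :=
          mul_pos (by have := Real.pi_pos; positivity) h2s
        have := Real.rpow_le_rpow_of_nonpos hpos2 hjord (by norm_num : (-(1:ℝ)/4) ≤ 0)
        calc ‖Real.cos s ^ (-(1:ℝ)/4)‖ = Real.cos s ^ (-(1:ℝ)/4) := by
              rw [Real.norm_eq_abs, abs_of_nonneg (Real.rpow_nonneg hcosnn _)]
          _ ≤ (2/π * (π/2 - s)) ^ (-(1:ℝ)/4) := this
          _ = (2/π) ^ (-(1:ℝ)/4) * (π/2 - s) ^ (-(1:ℝ)/4) := by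
              rw [Real.mul_rpow (by positivity) (by linarith)]
  have h2 : IntervalIntegrable (fun s => Real.cos s ^ (-(1:ℝ)/4)) volume (-(π/2)) 0 := by
    have := ((IntervalIntegrable.iff_comp_neg (f := fun s => Real.cos s ^ (-(1:ℝ)/4)) (a := 0) (b := π/2) (by simp)).mp h1)
    simp only [Real.cos_neg, neg_zero] at this
    exact this.symm
  exact h2.trans h1

lemma aux_le_bound {t s : ℝ} (ht : 0 ≤ t) (hcos : 0 ≤ Real.cos s) :
    ‖(Real.cos s * (1 + t * Real.cos s) ^ 3) ^ (-(1:ℝ)/4)‖ ≤ Real.cos s ^ (-(1:ℝ)/4) := by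
  have h1 : (1:ℝ) ≤ 1 + t * Real.cos s := by nlinarith
  have hbasenn : 0 ≤ Real.cos s * (1 + t * Real.cos s) ^ 3 := by positivity
  rw [Real.norm_eq_abs, abs_of_nonneg (Real.rpow_nonneg hbasenn _)]
  rcases eq_or_lt_of_le hcos with h0 | hpos
  · rw [← h0]; simp [Real.zero_rpow (by norm_num : (-(1:ℝ)/4) ≠ 0)]
  · have h3 : (1:ℝ) ≤ (1 + t * Real.cos s) ^ 3 := one_le_pow₀ h1
    have hle : Real.cos s ≤ Real.cos s * (1 + t * Real.cos s) ^ 3 := by nlinarith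
    exact Real.rpow_le_rpow_of_nonpos hpos hle (by norm_num)

lemma aux_f_meas (t : ℝ) :
    Measurable (fun s => (Real.cos s * (1 + t * Real.cos s) ^ 3) ^ (-(1:ℝ)/4)) := by
  measurability

lemma aux_f_int {t : ℝ} (ht : 0 ≤ t) :
    IntervalIntegrable (fun s => (Real.cos s * (1 + t * Real.cos s) ^ 3) ^ (-(1:ℝ)/4))
      volume (-(π/2)) (π/2) := by
  refine IntervalIntegrable.mono_fun' aux_bound_int ((aux_f_meas t).aestronglyMeasurable) ?_
  rw [Filter.EventuallyLE, ae_restrict_iff' measurableSet_uIoc]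
  filter_upwards with s hs
  rw [uIoc_of_le (by linarith [Real.pi_pos])] at hs
  have hcos : 0 ≤ Real.cos s :=
    Real.cos_nonneg_of_mem_Icc ⟨le_of_lt hs.1, hs.2⟩
  exact aux_le_bound ht hcos

lemma aux_cont {t₀ : ℝ} (ht₀ : t₀ ∈ Set.Ioo (0:ℝ) 1) : ContinuousAt ρfun t₀ := by
  have hI : ContinuousAt (fun t => ∫ s in (-(π/2))..(π/2),
      (Real.cos s * (1 + t * Real.cos s) ^ 3) ^ (-(1:ℝ)/4)) t₀ := by
    apply intervalIntegral.continuousAt_of_dominated_interval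
        (bound := fun s => Real.cos s ^ (-(1:ℝ)/4))
    · filter_upwards with t using (aux_f_meas t).aestronglyMeasurable
    · have hev : ∀ᶠ t in nhds t₀, t ∈ Set.Ioi (0:ℝ) := Ioi_mem_nhds ht₀.1
      filter_upwards [hev] with t ht
      filter_upwards with s hs
      rw [uIoc_of_le (by linarith [Real.pi_pos])] at hs
      exact aux_le_bound (le_of_lt ht) (Real.cos_nonneg_of_mem_Icc ⟨le_of_lt hs.1, hs.2⟩)
    · exact aux_bound_int
    · have hne : ∀ᵐ s : ℝ, s ∈ ({π/2} : Set ℝ)ᶜ :=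
        compl_mem_ae_iff.mpr (measure_singleton _)
      filter_upwards [hne] with s hsne hs
      rw [uIoc_of_le (by linarith [Real.pi_pos])] at hs
      have hsne' : s ≠ π/2 := by simpa using hsne
      have hcospos : 0 < Real.cos s :=
        Real.cos_pos_of_mem_Ioo ⟨hs.1, lt_of_le_of_ne hs.2 hsne'⟩
      have hbase : 0 < Real.cos s * (1 + t₀ * Real.cos s) ^ 3 :=
        mul_pos hcospos (pow_pos (by nlinarith [ht₀.1]) 3)
      have hinner : ContinuousAt (fun t : ℝ => Real.cos s * (1 + t * Real.cos s) ^ 3) t₀ := by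
        fun_prop
      exact hinner.rpow_const (Or.inl hbase.ne')
  have h2 : ContinuousAt (fun t : ℝ => 2 * t ^ ((3:ℝ)/4)) t₀ :=
    continuousAt_const.mul (Real.continuousAt_rpow_const t₀ _ (Or.inl ht₀.1.ne'))
  exact h2.mul hI

/-- `ρ(t) → 0` as `t → 0⁺`, `ρ(t) > 0` on `(0,1)`; consequently `ρ` attains
both rational and irrational values on `(0,1)`. -/
theorem statement11 :
    Filter.Tendsto ρfun (nhdsWithin 0 (Set.Ioi 0)) (nhds 0) ∧
    (∀ t ∈ Set.Ioo (0 : ℝ) 1, 0 < ρfun t) ∧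
    (∃ t ∈ Set.Ioo (0 : ℝ) 1, ∃ q : ℚ, ρfun t = q) ∧
    (∃ t ∈ Set.Ioo (0 : ℝ) 1, Irrational (ρfun t)) := by
  have hπ := Real.pi_pos
  set C : ℝ := ∫ s in (-(π/2))..(π/2), Real.cos s ^ (-(1:ℝ)/4) with hCdef
  have hpos : ∀ t ∈ Set.Ioo (0 : ℝ) 1, 0 < ρfun t := by
    intro t ht
    have hIpos : 0 < ∫ s in (-(π/2))..(π/2),
        (Real.cos s * (1 + t * Real.cos s) ^ 3) ^ (-(1:ℝ)/4) := by
      refine intervalIntegral_pos_of_pos_on (aux_f_int ht.1.le) ?_ (by linarith)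
      intro s hs
      have hcp : 0 < Real.cos s := Real.cos_pos_of_mem_Ioo hs
      have hb : 0 < Real.cos s * (1 + t * Real.cos s) ^ 3 :=
        mul_pos hcp (pow_pos (by nlinarith [ht.1]) 3)
      exact Real.rpow_pos_of_pos hb _
    exact mul_pos (mul_pos two_pos (Real.rpow_pos_of_pos ht.1 _)) hIpos
  have hlim : Filter.Tendsto ρfun (nhdsWithin 0 (Set.Ioi 0)) (nhds 0) := by
    have hupper : ∀ᶠ t in nhdsWithin 0 (Set.Ioi 0), ρfun t ≤ 2 * t ^ ((3:ℝ)/4) * C := by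
      filter_upwards [self_mem_nhdsWithin] with t (ht : (0:ℝ) < t)
      have hmono : (∫ s in (-(π/2))..(π/2),
          (Real.cos s * (1 + t * Real.cos s) ^ 3) ^ (-(1:ℝ)/4)) ≤ C := by
        refine intervalIntegral.integral_mono_on (by linarith)
          (aux_f_int ht.le) aux_bound_int ?_
        intro s hs
        have hcos : 0 ≤ Real.cos s := Real.cos_nonneg_of_mem_Icc ⟨hs.1, hs.2⟩
        calc (Real.cos s * (1 + t * Real.cos s) ^ 3) ^ (-(1:ℝ)/4)
            ≤ ‖(Real.cos s * (1 + t * Real.cos s) ^ 3) ^ (-(1:ℝ)/4)‖ := by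
              rw [Real.norm_eq_abs]; exact le_abs_self _
          _ ≤ Real.cos s ^ (-(1:ℝ)/4) := aux_le_bound ht.le hcos
      have h24 : (0:ℝ) ≤ 2 * t ^ ((3:ℝ)/4) := by positivity
      exact mul_le_mul_of_nonneg_left hmono h24
    have hlower : ∀ᶠ t in nhdsWithin 0 (Set.Ioi 0), (0:ℝ) ≤ ρfun t := by
      filter_upwards [self_mem_nhdsWithin] with t (ht : (0:ℝ) < t)
      have hI : (0:ℝ) ≤ ∫ s in (-(π/2))..(π/2),
          (Real.cos s * (1 + t * Real.cos s) ^ 3) ^ (-(1:ℝ)/4) := by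
        refine intervalIntegral.integral_nonneg (by linarith) ?_
        intro s hs
        have hcos : 0 ≤ Real.cos s := Real.cos_nonneg_of_mem_Icc ⟨hs.1, hs.2⟩
        have : (0:ℝ) ≤ Real.cos s * (1 + t * Real.cos s) ^ 3 :=
          mul_nonneg hcos (pow_nonneg (by nlinarith) 3)
        exact Real.rpow_nonneg this _
      exact mul_nonneg (by positivity) hI
    have htend : Filter.Tendsto (fun t : ℝ => 2 * t ^ ((3:ℝ)/4) * C)
        (nhdsWithin 0 (Set.Ioi 0)) (nhds 0) := by
      have hc : ContinuousAt (fun t : ℝ => 2 * t ^ ((3:ℝ)/4) * C) 0 :=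
        (continuousAt_const.mul (Real.continuousAt_rpow_const 0 _ (Or.inr (by norm_num)))).mul
          continuousAt_const
      have h0 : (2:ℝ) * (0:ℝ) ^ ((3:ℝ)/4) * C = 0 := by
        simp [Real.zero_rpow (by norm_num : ((3:ℝ)/4) ≠ 0)]
      have := hc.tendsto
      rw [h0] at this
      exact this.mono_left nhdsWithin_le_nhds
    exact tendsto_of_tendsto_of_tendsto_of_le_of_le' tendsto_const_nhds htend hlower hupper
  refine ⟨hlim, hpos, ?_⟩
  have ha : (1/2 : ℝ) ∈ Set.Ioo (0:ℝ) 1 := by norm_num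
  have hca : 0 < ρfun (1/2) := hpos _ ha
  have hev : ∀ᶠ t in nhdsWithin 0 (Set.Ioi 0), ρfun t < ρfun (1/2) :=
    hlim (Iio_mem_nhds hca)
  have hev2 : ∀ᶠ t in nhdsWithin (0:ℝ) (Set.Ioi 0), t ∈ Set.Ioo (0:ℝ) 1 := by
    have h1 : Set.Iio (1:ℝ) ∈ nhds (0:ℝ) := Iio_mem_nhds one_pos
    filter_upwards [self_mem_nhdsWithin, Filter.mem_inf_of_left h1] with t h2 h3
    · exact ⟨h2, h3⟩
  obtain ⟨b, hb1, hb2⟩ := (hev.and hev2).exists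
  have hsub : Set.uIcc b (1/2 : ℝ) ⊆ Set.Ioo (0:ℝ) 1 :=
    Set.ordConnected_Ioo.uIcc_subset hb2 ha
  have hconts : ContinuousOn ρfun (Set.uIcc b (1/2 : ℝ)) :=
    fun x hx => (aux_cont (hsub hx)).continuousWithinAt
  have hiv := intermediate_value_uIcc hconts
  constructor
  · obtain ⟨q, hq1, hq2⟩ := exists_rat_btwn hb1
    have hqmem : (q : ℝ) ∈ Set.uIcc (ρfun b) (ρfun (1/2)) := by
      rw [Set.uIcc_of_le (le_of_lt hb1)]; exact ⟨hq1.le, hq2.le⟩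
    obtain ⟨x, hx, hxq⟩ := hiv hqmem
    exact ⟨x, hsub hx, q, hxq⟩
  · obtain ⟨r, hr, hr1, hr2⟩ := exists_irrational_btwn hb1
    have hrmem : r ∈ Set.uIcc (ρfun b) (ρfun (1/2)) := by
      rw [Set.uIcc_of_le (le_of_lt hb1)]; exact ⟨hr1.le, hr2.le⟩
    obtain ⟨x, hx, hxr⟩ := hiv hrmem
    exact ⟨x, hsub hx, hxr ▸ hr⟩
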